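/- Consider the adaptive gradient flow for the exponential-loss empirical risk with the separability assumption. Then the empirical risk decreases to zero along the flow, lim_{t→∞} L̃(v(t)) = 0, and consequently the parameter norm diverges, lim_{t→∞} ‖v(t)‖ = ∞. -/

import Mathlib

/-!
With `b ≤ βⱼ ≤ B`, the loss `F = L̃ ∘ v` satisfies `F' = -∑ⱼ βⱼ (∂ⱼL̃)² ≤ -b ‖∇L̃‖²`, so it
decreases, and once `F < 1` every margin `qᵢ(v)` stays above `m = -log F(t₀) > 0`. Euler's identity
`⟪∇qᵢ(x), x⟫ = L qᵢ(x)` then gives `‖v‖ ‖∇L̃(v)‖ ≥ -⟪∇L̃(v), v⟫ ≥ L m F`. If `F` stayed above `ε`,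
then `b c log ‖v‖² + 2 B F` with `c = L m ε` would be nonincreasing, so `‖v‖` would stay bounded,
`‖∇L̃(v)‖` bounded below, and `F` would decrease at a uniform rate, which is absurd. Hence `F → 0`,
so `qᵢ(v) ≥ -log F → ∞`, and `qᵢ(x) ≤ M ‖x‖^L` (compactness of the unit sphere) forces `‖v‖ → ∞`.
-/

open MeasureTheory Filter
open Set Topology

section Homogeneous

variable {E : Type*} [NormedAddCommGroup E] [NormedSpace ℝ E] {f : E → ℝ} {L : ℝ}

lemma apply_zero_of_homogeneous (hL : 0 < L)
    (hhom : ∀ α : ℝ, 0 < α → ∀ x, f (α • x) = α ^ L * f x) : f 0 = 0 := by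
  have h := hhom 2 two_pos 0
  rw [smul_zero] at h
  have h2 : 1 < (2 : ℝ) ^ L := Real.one_lt_rpow one_lt_two hL
  nlinarith

theorem fderiv_apply_self_of_homogeneous {x : E} (hf : DifferentiableAt ℝ f x)
    (hhom : ∀ α : ℝ, 0 < α → ∀ x, f (α • x) = α ^ L * f x) :
    fderiv ℝ f x x = L * f x := by
  have hray : HasDerivAt (fun α : ℝ => f (α • x)) (fderiv ℝ f x x) 1 := by
    have hf1 : HasFDerivAt f (fderiv ℝ f x) ((1 : ℝ) • x) := by simpa using hf.hasFDerivAt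
    have hsmul : HasDerivAt (fun α : ℝ => α • x) x 1 := by
      simpa using (hasDerivAt_id (1 : ℝ)).smul_const x
    exact hf1.comp_hasDerivAt 1 hsmul
  have hpow : HasDerivAt (fun α : ℝ => α ^ L * f x) (L * f x) 1 := by
    simpa using (Real.hasDerivAt_rpow_const (x := 1) (p := L) (Or.inl one_ne_zero)).mul_const (f x)
  have heq : (fun α : ℝ => f (α • x)) =ᶠ[𝓝 1] fun α => α ^ L * f x := by
    filter_upwards [eventually_gt_nhds one_pos] with α hα using hhom α hα x
  exact hray.unique (hpow.congr_of_eventuallyEq heq)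

variable [FiniteDimensional ℝ E]

lemma exists_le_mul_norm_rpow_of_homogeneous (hf : Continuous f) (hL : 0 < L)
    (hhom : ∀ α : ℝ, 0 < α → ∀ x, f (α • x) = α ^ L * f x) :
    ∃ M, 0 < M ∧ ∀ x, f x ≤ M * ‖x‖ ^ L := by
  obtain ⟨C, hC⟩ := (isCompact_sphere (0 : E) 1).exists_bound_of_continuousOn hf.continuousOn
  refine ⟨|C| + 1, by positivity, fun x => ?_⟩
  rcases eq_or_ne x 0 with rfl | hx
  · simp [apply_zero_of_homogeneous hL hhom, Real.zero_rpow hL.ne']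
  have hnx : 0 < ‖x‖ := norm_pos_iff.2 hx
  have hunit : ‖x‖⁻¹ • x ∈ Metric.sphere (0 : E) 1 := by
    simp [norm_smul, hnx.ne']
  calc f x = ‖x‖ ^ L * f (‖x‖⁻¹ • x) := by rw [← hhom _ hnx, smul_inv_smul₀ hnx.ne']
    _ ≤ ‖x‖ ^ L * (|C| + 1) := by
        gcongr
        exact (Real.le_norm_self _).trans ((hC _ hunit).trans ((le_abs_self C).trans (by linarith)))
    _ = (|C| + 1) * ‖x‖ ^ L := mul_comm _ _

lemma tendsto_norm_atTop_of_homogeneous {α : Type*} {l : Filter α} {v : α → E}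
    (hf : Continuous f) (hL : 0 < L) (hhom : ∀ α : ℝ, 0 < α → ∀ x, f (α • x) = α ^ L * f x)
    (h : Tendsto (fun a => f (v a)) l atTop) : Tendsto (fun a => ‖v a‖) l atTop := by
  obtain ⟨M, hM, hfM⟩ := exists_le_mul_norm_rpow_of_homogeneous hf hL hhom
  have hpow : Tendsto (fun a => ‖v a‖ ^ L) l atTop :=
    tendsto_atTop_mono (fun a => (div_le_iff₀' hM).2 (hfM (v a))) (h.atTop_div_const hM)
  refine ((tendsto_rpow_atTop (inv_pos.2 hL)).comp hpow).congr fun a => ?_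
  exact Real.rpow_rpow_inv (norm_nonneg _) hL.ne'

end Homogeneous

section ExpLoss

variable {κ E : Type*} [Fintype κ]

noncomputable def expLoss (q : κ → E → ℝ) (x : E) : ℝ := ∑ i, Real.exp (-q i x)

variable {q : κ → E → ℝ}

lemma expLoss_nonneg (x : E) : 0 ≤ expLoss q x :=
  Finset.sum_nonneg fun _ _ => (Real.exp_pos _).le

lemma exp_neg_le_expLoss (x : E) (i : κ) : Real.exp (-q i x) ≤ expLoss q x :=
  Finset.single_le_sum (f := fun i => Real.exp (-q i x)) (fun _ _ => (Real.exp_pos _).le)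
    (Finset.mem_univ i)

lemma expLoss_pos [Nonempty κ] (x : E) : 0 < expLoss q x :=
  Finset.sum_pos (fun _ _ => Real.exp_pos _) Finset.univ_nonempty

lemma neg_log_expLoss_le (x : E) (i : κ) : -Real.log (expLoss q x) ≤ q i x := by
  have := Real.log_le_log (Real.exp_pos _) (exp_neg_le_expLoss (q := q) x i)
  rw [Real.log_exp] at this
  linarith

lemma tendsto_atTop_of_tendsto_expLoss_zero [Nonempty κ] {α : Type*} {l : Filter α} {x : α → E}
    (h : Tendsto (fun a => expLoss q (x a)) l (𝓝 0)) (i : κ) :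
    Tendsto (fun a => q i (x a)) l atTop := by
  have hpos : Tendsto (fun a => expLoss q (x a)) l (𝓝[>] 0) :=
    tendsto_nhdsWithin_iff.2 ⟨h, Eventually.of_forall fun a => expLoss_pos (x a)⟩
  exact tendsto_atTop_mono (fun a => neg_log_expLoss_le (x a) i)
    (tendsto_neg_atBot_atTop.comp (Real.tendsto_log_nhdsGT_zero.comp hpos))

variable [NormedAddCommGroup E] [NormedSpace ℝ E]

lemma hasFDerivAt_expLoss {x : E} (hq : ∀ i, DifferentiableAt ℝ (q i) x) :
    HasFDerivAt (expLoss q) (∑ i, Real.exp (-q i x) • -fderiv ℝ (q i) x) x :=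
  HasFDerivAt.fun_sum fun i _ => ((hq i).hasFDerivAt.neg).exp

lemma fderiv_expLoss_apply_self_of_homogeneous {L : ℝ} {x : E}
    (hq : ∀ i, DifferentiableAt ℝ (q i) x)
    (hhom : ∀ i, ∀ α : ℝ, 0 < α → ∀ x, q i (α • x) = α ^ L * q i x) :
    fderiv ℝ (expLoss q) x x = -(L * ∑ i, Real.exp (-q i x) * q i x) := by
  simp only [(hasFDerivAt_expLoss hq).fderiv, sum_apply, smul_apply, neg_apply,
    fderiv_apply_self_of_homogeneous (hq _) (hhom _), Finset.mul_sum, ← Finset.sum_neg_distrib,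
    smul_eq_mul]
  exact Finset.sum_congr rfl fun i _ => by ring

lemma mul_expLoss_le_neg_fderiv_apply_self {L m : ℝ} {x : E} (hL : 0 ≤ L)
    (hq : ∀ i, DifferentiableAt ℝ (q i) x)
    (hhom : ∀ i, ∀ α : ℝ, 0 < α → ∀ x, q i (α • x) = α ^ L * q i x) (hm : ∀ i, m ≤ q i x) :
    L * m * expLoss q x ≤ -fderiv ℝ (expLoss q) x x := by
  rw [fderiv_expLoss_apply_self_of_homogeneous hq hhom, neg_neg, mul_assoc, expLoss,
    Finset.mul_sum]
  refine mul_le_mul_of_nonneg_left (Finset.sum_le_sum fun i _ => ?_) hL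
  rw [mul_comm]
  exact mul_le_mul_of_nonneg_left (hm i) (Real.exp_pos _).le

end ExpLoss

section Euclidean

variable {ι : Type*} [Fintype ι]

lemma EuclideanSpace.gradient_apply [DecidableEq ι] (f : EuclideanSpace ℝ ι → ℝ)
    (x : EuclideanSpace ℝ ι) (j : ι) :
    gradient f x j = fderiv ℝ f x (EuclideanSpace.single j 1) := by
  rw [← inner_gradient_left, EuclideanSpace.inner_single_right]
  simp

lemma EuclideanSpace.hasDerivWithinAt_of_apply {f : ℝ → EuclideanSpace ℝ ι}
    {f' : EuclideanSpace ℝ ι} {s : Set ℝ} {x : ℝ}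
    (h : ∀ j, HasDerivWithinAt (fun t => f t j) (f' j) s x) : HasDerivWithinAt f f' s x := by
  rw [hasDerivWithinAt_iff_hasFDerivWithinAt, hasFDerivWithinAt_piLp]
  exact fun j => (h j).hasFDerivWithinAt

lemma inner_toLp_mul_le {g : EuclideanSpace ℝ ι} {w : ι → ℝ} {b : ℝ} (hw : ∀ j, w j ≤ -b) :
    inner ℝ g (WithLp.toLp 2 fun j => w j * g j) ≤ -b * ‖g‖ ^ 2 := by
  rw [EuclideanSpace.real_norm_sq_eq, Finset.mul_sum, PiLp.inner_apply]
  refine Finset.sum_le_sum fun j _ => ?_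
  simp only [RCLike.inner_apply, conj_trivial]
  nlinarith [hw j, sq_nonneg (g j)]

lemma norm_toLp_mul_le {g : EuclideanSpace ℝ ι} {w : ι → ℝ} {B : ℝ} (hB : 0 ≤ B)
    (hw : ∀ j, |w j| ≤ B) : ‖WithLp.toLp 2 (fun j => w j * g j)‖ ≤ B * ‖g‖ := by
  refine le_of_sq_le_sq ?_ (by positivity)
  rw [mul_pow, EuclideanSpace.real_norm_sq_eq, EuclideanSpace.real_norm_sq_eq, Finset.mul_sum]
  refine Finset.sum_le_sum fun j _ => ?_
  rw [PiLp.toLp_apply, mul_pow]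
  exact mul_le_mul_of_nonneg_right (sq_le_sq' (abs_le.1 (hw j)).1 (abs_le.1 (hw j)).2) (sq_nonneg _)

end Euclidean

lemma exists_abs_le_of_tendsto {f : ℝ → ℝ} {a l : ℝ} (hf : ContinuousOn f (Ici a))
    (hlim : Tendsto f atTop (𝓝 l)) : ∃ C, ∀ t ∈ Ici a, |f t| ≤ C := by
  obtain ⟨T, hT⟩ := eventually_atTop.1 (hlim.abs.eventually (gt_mem_nhds (lt_add_one |l|)))
  obtain ⟨C, hC⟩ := (isCompact_Icc (a := a) (b := T)).exists_bound_of_continuousOn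
    (hf.mono fun _ ht => ht.1)
  refine ⟨max C (|l| + 1), fun t ht => ?_⟩
  rcases le_total t T with htT | hTt
  · exact (hC t ⟨ht, htT⟩).trans (le_max_left _ _)
  · exact (hT t hTt).le.trans (le_max_right _ _)

lemma exists_pos_bounds_of_tendsto {ι : Type*} [Finite ι] {β : ℝ → ι → ℝ} {a : ℝ} {l : ι → ℝ}
    (hcont : ∀ j, ContinuousOn (fun t => β t j) (Ici a)) (hpos : ∀ t ∈ Ici a, ∀ j, 0 < β t j)
    (hl : ∀ j, l j ≠ 0) (hlim : ∀ j, Tendsto (fun t => β t j) atTop (𝓝 (l j))) :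
    ∃ b B, 0 < b ∧ ∀ t ∈ Ici a, ∀ j, b ≤ β t j ∧ β t j ≤ B := by
  have key : ∀ j, ∃ C, ∀ t ∈ Ici a, β t j ≤ C ∧ (β t j)⁻¹ ≤ C := by
    intro j
    obtain ⟨C₁, h₁⟩ := exists_abs_le_of_tendsto (hcont j) (hlim j)
    obtain ⟨C₂, h₂⟩ := exists_abs_le_of_tendsto ((hcont j).inv₀ fun t ht => (hpos t ht j).ne')
      ((hlim j).inv₀ (hl j))
    exact ⟨max C₁ C₂, fun t ht => ⟨(le_abs_self _).trans ((h₁ t ht).trans (le_max_left _ _)),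
      (le_abs_self _).trans ((h₂ t ht).trans (le_max_right _ _))⟩⟩
  choose C hC using key
  obtain ⟨M, hM⟩ := (Set.finite_range C).bddAbove
  have hCM : ∀ j, C j ≤ max M 1 := fun j => (hM ⟨j, rfl⟩).trans (le_max_left _ _)
  refine ⟨(max M 1)⁻¹, max M 1, by positivity, fun t ht j => ⟨?_, (hC j t ht).1.trans (hCM j)⟩⟩
  exact inv_le_of_inv_le₀ (hpos t ht j) ((hC j t ht).2.trans (hCM j))

lemma antitoneOn_Ici_of_hasDerivWithinAt_nonpos {a : ℝ} {f f' : ℝ → ℝ}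
    (hf : ∀ t ∈ Ici a, HasDerivWithinAt f (f' t) (Ici a) t) (hf' : ∀ t ∈ Ici a, f' t ≤ 0) :
    AntitoneOn f (Ici a) := by
  refine antitoneOn_of_hasDerivWithinAt_nonpos (f' := f') (convex_Ici a)
    (fun t ht => (hf t ht).continuousWithinAt) (fun t ht => ?_) (fun t ht => ?_)
  all_goals rw [interior_Ici] at *
  · exact (hf t (Ioi_subset_Ici_self ht)).mono Ioi_subset_Ici_self
  · exact hf' t (Ioi_subset_Ici_self ht)

lemma exists_lt_zero_of_hasDerivWithinAt_le_neg {a δ : ℝ} {f f' : ℝ → ℝ}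
    (hf : ∀ t ∈ Ici a, HasDerivWithinAt f (f' t) (Ici a) t) (hf' : ∀ t ∈ Ici a, f' t ≤ -δ)
    (hδ : 0 < δ) : ∃ t ∈ Ici a, f t < 0 := by
  have hanti : AntitoneOn (fun t => f t + δ * t) (Ici a) :=
    antitoneOn_Ici_of_hasDerivWithinAt_nonpos
      (fun t ht => (hf t ht).add ((hasDerivWithinAt_id t _).const_mul δ))
      fun t ht => by simp only [mul_one]; linarith [hf' t ht]
  set T := a + (|f a| + 1) / δ
  have hT : a ≤ T := le_add_of_nonneg_right (by positivity)
  have hδT : δ * T = δ * a + (|f a| + 1) := by simp only [T]; field_simp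
  refine ⟨T, hT, ?_⟩
  linarith [hanti self_mem_Ici hT hT, le_abs_self (f a)]

lemma tendsto_zero_of_antitoneOn_of_exists_lt {f : ℝ → ℝ} {a : ℝ} (hf : AntitoneOn f (Ici a))
    (h0 : ∀ t ∈ Ici a, 0 ≤ f t) (hsmall : ∀ ε > 0, ∃ t ∈ Ici a, f t < ε) :
    Tendsto f atTop (𝓝 0) := by
  refine Metric.tendsto_atTop.2 fun ε hε => ?_
  obtain ⟨T, hT, hfT⟩ := hsmall ε hε
  refine ⟨T, fun t ht => ?_⟩
  have ht' : t ∈ Ici a := le_trans hT ht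
  rw [Real.dist_0_eq_abs, abs_of_nonneg (h0 t ht')]
  exact (hf hT ht' ht).trans_lt hfT

section Descent

variable {E : Type*} [NormedAddCommGroup E] [InnerProductSpace ℝ E]
  {a b B c : ℝ} {v v' : ℝ → E} {F F' n : ℝ → ℝ}

lemma exists_norm_le_of_descent
    (hv : ∀ t ∈ Ici a, HasDerivWithinAt v (v' t) (Ici a) t)
    (hF : ∀ t ∈ Ici a, HasDerivWithinAt F (F' t) (Ici a) t)
    (hF' : ∀ t ∈ Ici a, F' t ≤ -b * n t ^ 2) (hv' : ∀ t ∈ Ici a, ‖v' t‖ ≤ B * n t)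
    (hF0 : ∀ t ∈ Ici a, 0 ≤ F t) (hb : 0 < b) (hB : 0 ≤ B) (hc : 0 < c)
    (hlow : ∀ t ∈ Ici a, c ≤ ‖v t‖ * n t) :
    ∃ R, 0 < R ∧ ∀ t ∈ Ici a, ‖v t‖ ≤ R := by
  have hvpos : ∀ t ∈ Ici a, 0 < ‖v t‖ := fun t ht =>
    (norm_nonneg _).lt_of_ne fun h => by linarith [hlow t ht, h ▸ zero_mul (n t)]
  set G : ℝ → ℝ := fun t => b * c * Real.log (‖v t‖ ^ 2) + 2 * B * F t
  have hG : AntitoneOn G (Ici a) := by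
    refine antitoneOn_Ici_of_hasDerivWithinAt_nonpos (fun t ht => (((hv t ht).norm_sq.log
      (pow_pos (hvpos t ht) 2).ne').const_mul (b * c)).add ((hF t ht).const_mul (2 * B)))
      fun t ht => ?_
    have hvt := hvpos t ht
    have hinner : inner ℝ (v t) (v' t) ≤ ‖v t‖ * (B * n t) :=
      (real_inner_le_norm _ _).trans (mul_le_mul_of_nonneg_left (hv' t ht) hvt.le)
    have hcn : c / ‖v t‖ ≤ n t := by rw [div_le_iff₀ hvt]; linarith [hlow t ht]
    have hn : 0 ≤ n t := (div_pos hc hvt).le.trans hcn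
    calc b * c * (2 * inner ℝ (v t) (v' t) / ‖v t‖ ^ 2) + 2 * B * F' t
        ≤ b * c * (2 * (‖v t‖ * (B * n t)) / ‖v t‖ ^ 2) + 2 * B * (-b * n t ^ 2) := by
          gcongr
          exact hF' t ht
      _ = 2 * b * B * n t * (c / ‖v t‖ - n t) := by field_simp; ring
      _ ≤ 0 := mul_nonpos_of_nonneg_of_nonpos (by positivity) (by linarith)
  refine ⟨Real.exp (G a / (2 * b * c)), Real.exp_pos _, fun t ht => ?_⟩
  have hGt : G t ≤ G a := hG self_mem_Ici ht ht
  have hlog : Real.log (‖v t‖ ^ 2) = 2 * Real.log ‖v t‖ := by simp [Real.log_pow]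
  simp only [G, hlog] at hGt
  rw [← Real.log_le_iff_le_exp (hvpos t ht), le_div_iff₀ (by positivity)]
  linarith [mul_nonneg hB (hF0 t ht)]

theorem exists_norm_mul_lt_of_descent
    (hv : ∀ t ∈ Ici a, HasDerivWithinAt v (v' t) (Ici a) t)
    (hF : ∀ t ∈ Ici a, HasDerivWithinAt F (F' t) (Ici a) t)
    (hF' : ∀ t ∈ Ici a, F' t ≤ -b * n t ^ 2) (hv' : ∀ t ∈ Ici a, ‖v' t‖ ≤ B * n t)
    (hF0 : ∀ t ∈ Ici a, 0 ≤ F t) (hb : 0 < b) (hB : 0 ≤ B) (hc : 0 < c) :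
    ∃ t ∈ Ici a, ‖v t‖ * n t < c := by
  by_contra! hlow
  obtain ⟨R, hR, hvR⟩ := exists_norm_le_of_descent hv hF hF' hv' hF0 hb hB hc hlow
  have hcn : ∀ t ∈ Ici a, c / R ≤ n t := fun t ht => by
    have hn : 0 < n t := pos_of_mul_pos_right (hc.trans_le (hlow t ht)) (norm_nonneg _)
    rw [div_le_iff₀ hR, mul_comm]
    exact (hlow t ht).trans (mul_le_mul_of_nonneg_right (hvR t ht) hn.le)
  obtain ⟨t, ht, hneg⟩ := exists_lt_zero_of_hasDerivWithinAt_le_neg hF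
    (fun t ht => (hF' t ht).trans (by nlinarith [pow_le_pow_left₀ (by positivity) (hcn t ht) 2]))
    (by positivity : 0 < b * (c / R) ^ 2)
  linarith [hF0 t ht]

end Descent

theorem tendsto_expLoss_zero_of_flow {ι κ : Type*} [Fintype ι] [DecidableEq ι] [Fintype κ]
    [Nonempty κ] {q : κ → EuclideanSpace ℝ ι → ℝ} {L : ℝ} (hL : 0 < L)
    (hq : ∀ i, Differentiable ℝ (q i))
    (hhom : ∀ i, ∀ α : ℝ, 0 < α → ∀ x, q i (α • x) = α ^ L * q i x)
    {v : ℝ → EuclideanSpace ℝ ι} {β : ℝ → ι → ℝ} {a b B : ℝ} (hb : 0 < b)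
    (hβ : ∀ t ∈ Ici a, ∀ j, b ≤ β t j ∧ β t j ≤ B)
    (hflow : ∀ j, ∀ t ∈ Ici a, HasDerivWithinAt (fun s => v s j)
      (-(β t j) * fderiv ℝ (expLoss q) (v t) (EuclideanSpace.single j 1)) (Ici a) t)
    (hsep : expLoss q (v a) < 1) :
    Tendsto (fun t => expLoss q (v t)) atTop (𝓝 0) := by
  set F : ℝ → ℝ := fun t => expLoss q (v t)
  set g : ℝ → EuclideanSpace ℝ ι := fun t => gradient (expLoss q) (v t)
  set v' : ℝ → EuclideanSpace ℝ ι := fun t => WithLp.toLp 2 fun j => -β t j * g t j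
  have hdiff : Differentiable ℝ (expLoss q) := fun x =>
    (hasFDerivAt_expLoss fun i => hq i x).differentiableAt
  have hv : ∀ t ∈ Ici a, HasDerivWithinAt v (v' t) (Ici a) t := fun t ht =>
    EuclideanSpace.hasDerivWithinAt_of_apply fun j => by
      simpa [v', g, EuclideanSpace.gradient_apply] using hflow j t ht
  have hF : ∀ t ∈ Ici a, HasDerivWithinAt F (inner ℝ (g t) (v' t)) (Ici a) t := fun t ht =>
    ((hdiff (v t)).hasFDerivAt.comp_hasDerivWithinAt t (hv t ht)).congr_deriv
      inner_gradient_left.symm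
  have hF' : ∀ t ∈ Ici a, inner ℝ (g t) (v' t) ≤ -b * ‖g t‖ ^ 2 := fun t ht =>
    inner_toLp_mul_le fun j => neg_le_neg (hβ t ht j).1
  have hv' : ∀ t ∈ Ici a, ‖v' t‖ ≤ max B 0 * ‖g t‖ := fun t ht =>
    norm_toLp_mul_le (le_max_right _ _) fun j => by
      rw [abs_neg, abs_of_pos (hb.trans_le (hβ t ht j).1)]
      exact (hβ t ht j).2.trans (le_max_left _ _)
  have hF0 : ∀ t ∈ Ici a, 0 ≤ F t := fun t _ => expLoss_nonneg _
  have hanti : AntitoneOn F (Ici a) := antitoneOn_Ici_of_hasDerivWithinAt_nonpos hF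
    fun t ht => (hF' t ht).trans (mul_nonpos_of_nonpos_of_nonneg (neg_nonpos.2 hb.le) (sq_nonneg _))
  set m := -Real.log (F a)
  have hm : 0 < m := neg_pos.2 (Real.log_neg (expLoss_pos _) hsep)
  have hqm : ∀ t ∈ Ici a, ∀ i, m ≤ q i (v t) := fun t ht i =>
    (neg_le_neg (Real.log_le_log (expLoss_pos _) (hanti self_mem_Ici ht ht))).trans
      (neg_log_expLoss_le _ i)
  have hnorm : ∀ t ∈ Ici a, L * m * F t ≤ ‖v t‖ * ‖g t‖ := fun t ht => by
    refine (mul_expLoss_le_neg_fderiv_apply_self hL.le (fun i => hq i _) hhom (hqm t ht)).trans ?_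
    rw [← inner_gradient_left, mul_comm]
    exact (neg_le_abs _).trans (abs_real_inner_le_norm _ _)
  refine tendsto_zero_of_antitoneOn_of_exists_lt hanti hF0 fun ε hε => ?_
  obtain ⟨t, ht, hlt⟩ := exists_norm_mul_lt_of_descent hv hF hF' hv' hF0 hb (le_max_right _ _)
    (by positivity : 0 < L * m * ε)
  exact ⟨t, ht, lt_of_mul_lt_mul_left ((hnorm t ht).trans_lt hlt) (by positivity)⟩

theorem adaptive_flow_loss_to_zero_general (p N : ℕ) (hN : 1 ≤ N)
    (L : ℝ) (hL : 0 < L)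
    (q : Fin N → EuclideanSpace ℝ (Fin p) → ℝ)
    (hq : ∀ i, ContDiff ℝ 1 (q i))
    (hhom : ∀ i, ∀ α : ℝ, 0 < α → ∀ v, q i (α • v) = α ^ L * q i v)
    (Ltil : EuclideanSpace ℝ (Fin p) → ℝ)
    (hLtil : ∀ x, Ltil x = ∑ i, Real.exp (-(q i x)))
    (v : ℝ → EuclideanSpace ℝ (Fin p))
    (β β' : ℝ → Fin p → ℝ)
    (hβpos : ∀ t ∈ Set.Ici (0:ℝ), ∀ j, 0 < β t j)
    (hβderiv : ∀ j, ∀ t ∈ Set.Ici (0:ℝ),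
      HasDerivWithinAt (fun s => β s j) (β' t j) (Set.Ici 0) t)
    (hβlim : ∀ j, Tendsto (fun t => β t j) atTop (nhds 1))
    (hflow : ∀ j, ∀ t ∈ Set.Ici (0:ℝ),
      HasDerivWithinAt (fun s => v s j)
        (-(β t j) * fderiv ℝ Ltil (v t) (EuclideanSpace.single j 1)) (Set.Ici 0) t)
    (t₀ : ℝ) (ht₀ : 0 ≤ t₀) (hsep : Ltil (v t₀) < 1) :
    Tendsto (fun t => Ltil (v t)) atTop (nhds 0) ∧
      Tendsto (fun t => ‖v t‖) atTop atTop := by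
  obtain rfl : Ltil = expLoss q := funext hLtil
  have : Nonempty (Fin N) := ⟨⟨0, hN⟩⟩
  have hqd : ∀ i, Differentiable ℝ (q i) := fun i => (hq i).differentiable one_ne_zero
  obtain ⟨b, B, hb, hβb⟩ := exists_pos_bounds_of_tendsto
    (fun j t ht => (hβderiv j t ht).continuousWithinAt) hβpos (fun _ => one_ne_zero) hβlim
  have hsub : Ici t₀ ⊆ Ici 0 := Ici_subset_Ici.2 ht₀
  have hloss := tendsto_expLoss_zero_of_flow hL hqd hhom hb (fun t ht => hβb t (hsub ht))
    (fun j t ht => (hflow j t (hsub ht)).mono hsub) hsep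
  exact ⟨hloss, tendsto_norm_atTop_of_homogeneous (hqd ⟨0, hN⟩).continuous hL (hhom _)
    (tendsto_atTop_of_tendsto_expLoss_zero hloss _)⟩

/-- Along an adaptive gradient flow for the exponential-loss empirical risk of
`L`-homogeneous `C¹` functions with the separability assumption, the empirical risk
tends to zero and the parameter norm diverges to infinity. -/
theorem adaptive_flow_loss_to_zero (p N : ℕ) (hp : 1 ≤ p) (hN : 1 ≤ N)
    (L : ℝ) (hL : 0 < L)
    (q : Fin N → EuclideanSpace ℝ (Fin p) → ℝ)
    (hq : ∀ i, ContDiff ℝ 1 (q i))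
    (hhom : ∀ i, ∀ α : ℝ, 0 < α → ∀ v, q i (α • v) = α ^ L * q i v)
    (Ltil : EuclideanSpace ℝ (Fin p) → ℝ)
    (hLtil : ∀ x, Ltil x = ∑ i, Real.exp (-(q i x)))
    (v : ℝ → EuclideanSpace ℝ (Fin p))
    (β β' : ℝ → Fin p → ℝ)
    (hβpos : ∀ t ∈ Set.Ici (0:ℝ), ∀ j, 0 < β t j)
    (hβderiv : ∀ j, ∀ t ∈ Set.Ici (0:ℝ),
      HasDerivWithinAt (fun s => β s j) (β' t j) (Set.Ici 0) t)
    (hβ'cont : ∀ j, ContinuousOn (fun t => β' t j) (Set.Ici 0))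
    (hβlim : ∀ j, Tendsto (fun t => β t j) atTop (nhds 1))
    (hβint : ∀ j, IntegrableOn (fun t => |β' t j / β t j|) (Set.Ici 0))
    (hflow : ∀ j, ∀ t ∈ Set.Ici (0:ℝ),
      HasDerivWithinAt (fun s => v s j)
        (-(β t j) * fderiv ℝ Ltil (v t) (EuclideanSpace.single j 1)) (Set.Ici 0) t)
    (t₀ : ℝ) (ht₀ : 0 ≤ t₀) (hsep : Ltil (v t₀) < 1) :
    Tendsto (fun t => Ltil (v t)) atTop (nhds 0) ∧
      Tendsto (fun t => ‖v t‖) atTop atTop :=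
  adaptive_flow_loss_to_zero_general p N hN L hL q hq hhom Ltil hLtil v β β' hβpos hβderiv hβlim
    hflow t₀ ht₀ hsep
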